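/- Let P be a cyclic normal Sylow p-subgroup of a finite group G with P central in G. Then Ω_ρ(G/P) = (Ω_ρ(G)·|P| − Ω_ρ(P)·|G|) / |P|². -/

import Mathlib

/-!
By Schur–Zassenhaus the Sylow subgroup `P` has a complement `H ≅ G ⧸ P`, and since `P` is
central, `G ≅ P × H`. The orders of `P` and `H` are coprime, so the order of `(a, b)` is
`o(a) * o(b)` and `Ω` of it is `Ω (o a) + Ω (o b)`. Summing over `P × H` gives
`Ω_ρ(G) = |H| Ω_ρ(P) + |P| Ω_ρ(H)` with `|H| = |G| / |P|`, which rearranges to the claim.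
-/

noncomputable def rho (G : Type*) [Group G] : ℕ := ∏ᶠ x : G, orderOf x

noncomputable def OmegaRho (G : Type*) [Group G] : ℕ :=
  ArithmeticFunction.cardFactors (rho G)

open ArithmeticFunction
open scoped ArithmeticFunction.Omega

lemma rho_congr {G H : Type*} [Group G] [Group H] (e : G ≃* H) : rho G = rho H :=
  finprod_eq_of_bijective e e.bijective fun x => (e.orderOf_eq x).symm

lemma omegaRho_congr {G H : Type*} [Group G] [Group H] (e : G ≃* H) :
    OmegaRho G = OmegaRho H := by
  rw [OmegaRho, OmegaRho, rho_congr e]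

lemma cardFactors_finset_prod {ι : Type*} {s : Finset ι} {f : ι → ℕ} (h : ∀ i ∈ s, f i ≠ 0) :
    Ω (∏ i ∈ s, f i) = ∑ i ∈ s, Ω (f i) := by
  rw [Finset.prod_eq_multiset_prod, cardFactors_multiset_prod, Multiset.map_map]
  · rfl
  · exact Multiset.prod_ne_zero fun h0 => by
      obtain ⟨i, hi, hfi⟩ := Multiset.mem_map.1 h0
      exact h i hi hfi

lemma omegaRho_eq_sum (G : Type*) [Group G] [Fintype G] :
    OmegaRho G = ∑ x : G, Ω (orderOf x) := by
  rw [OmegaRho, rho, finprod_eq_prod_of_fintype]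
  exact cardFactors_finset_prod fun x _ => (orderOf_pos x).ne'

lemma omegaRho_prod (A B : Type*) [Group A] [Group B] [Finite A] [Finite B]
    (hco : (Nat.card A).Coprime (Nat.card B)) :
    OmegaRho (A × B) = Nat.card B * OmegaRho A + Nat.card A * OmegaRho B := by
  cases nonempty_fintype A
  cases nonempty_fintype B
  have cardFactors_orderOf_pair (a : A) (b : B) :
      Ω (orderOf (a, b)) = Ω (orderOf a) + Ω (orderOf b) := by
    have hab : (orderOf a).Coprime (orderOf b) :=
      (hco.coprime_dvd_left (orderOf_dvd_natCard a)).coprime_dvd_right (orderOf_dvd_natCard b)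
    rw [Prod.orderOf, hab.lcm_eq_mul, cardFactors_mul (orderOf_pos a).ne' (orderOf_pos b).ne']
  simp only [omegaRho_eq_sum, Fintype.sum_prod_type, cardFactors_orderOf_pair,
    Finset.sum_add_distrib, Finset.sum_const, Finset.card_univ, smul_eq_mul, ← Finset.mul_sum,
    Nat.card_eq_fintype_card]

namespace Subgroup

variable {G : Type*} [Group G]

noncomputable def IsComplement'.prodMulEquivOfLeCenter {N H : Subgroup G}
    (h : N.IsComplement' H) (hN : N ≤ center G) : N × H ≃* G :=
  MulEquiv.ofBijective
    (MonoidHom.noncommCoprod N.subtype H.subtype fun a b => (mem_center_iff.1 (hN a.2) b).symm) h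

theorem omegaRho_eq_of_le_center [Finite G] {N : Subgroup G} [N.Normal] (hN : N ≤ center G)
    (hco : (Nat.card N).Coprime N.index) :
    OmegaRho G = N.index * OmegaRho N + Nat.card N * OmegaRho (G ⧸ N) := by
  obtain ⟨H, hH⟩ := exists_right_complement'_of_coprime hco
  have hindex : N.index = Nat.card H := hH.symm.index_eq_card
  rw [← omegaRho_congr (hH.prodMulEquivOfLeCenter hN), omegaRho_prod _ _ (hindex ▸ hco),
    omegaRho_congr hH.symm.QuotientMulEquiv, hindex]

end Subgroup

theorem omegaRho_quotient_central_general (G : Type*) [Group G] [Finite G] (p : ℕ) [Fact p.Prime]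
    (P : Sylow p G) [(P : Subgroup G).Normal]
    (hcen : (P : Subgroup G) ≤ Subgroup.center G) :
    OmegaRho (G ⧸ (P : Subgroup G)) =
      (OmegaRho G * Nat.card (P : Subgroup G) - OmegaRho (P : Subgroup G) * Nat.card G) /
        (Nat.card (P : Subgroup G)) ^ 2 := by
  rw [Subgroup.omegaRho_eq_of_le_center hcen P.card_coprime_index,
    ← (P : Subgroup G).card_mul_index]
  set k := Nat.card (P : Subgroup G)
  have hk : 0 < k := Nat.card_pos
  have hnum : ((P : Subgroup G).index * OmegaRho P + k * OmegaRho (G ⧸ (P : Subgroup G))) * k -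
      OmegaRho P * (k * (P : Subgroup G).index) = k ^ 2 * OmegaRho (G ⧸ (P : Subgroup G)) :=
    Nat.sub_eq_of_eq_add (by ring)
  rw [hnum, Nat.mul_div_cancel_left _ (by positivity)]

theorem omegaRho_quotient_central (G : Type*) [Group G] [Finite G] (p : ℕ) [Fact p.Prime]
    (P : Sylow p G) [(P : Subgroup G).Normal] (hcyc : IsCyclic (P : Subgroup G))
    (hcen : (P : Subgroup G) ≤ Subgroup.center G) :
    OmegaRho (G ⧸ (P : Subgroup G)) =
      (OmegaRho G * Nat.card (P : Subgroup G) - OmegaRho (P : Subgroup G) * Nat.card G) /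
        (Nat.card (P : Subgroup G)) ^ 2 :=
  omegaRho_quotient_central_general G p P hcen
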